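/- arXiv:0711.3865 — 7 statements merged into one kernel-verified Lean document; each statement's English description precedes it below -/
import Mathlib

section
/- Let K be a perfect field of characteristic p > 0 and let L be a field extension of K of transcendence degree 1 over K. If L is not perfect, then [L : L^p] = p, where L^p denotes the image of L under the Frobenius map x ↦ x^p. -/
/-!
Let `t` be a transcendence basis, `k = K(t^p)` and `E = K(t)`. Since `K` is perfect, every
element of `k` is a `p`-th power of an element of `E`, and `[E : k] ≤ p` because `t^p ∈ k`.
If `s` is `L^p`-independent and `b` is an `E`-basis of the finite extension `E(s)` (finite as
`L/E` is algebraic), then Frobenius makes `b^p` independent over `k`, so the products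
`b_i^p s_j` are `k`-independent in `E(s)`; comparing dimensions gives `|s| ≤ [E : k] ≤ p`.
Conversely `L/L^p` is purely inseparable, so its degree is a power of `p`, and it is not `1`
because `L` is not perfect.
-/

open IntermediateField Module Polynomial

section PthRoots

variable {k L : Type*} [Field k] [Field L] [Algebra k L] (p : ℕ) [ExpChar L p]
  {E : IntermediateField k L}

theorem LinearIndependent.pow_of_pth_roots (hE : ∀ x : k, ∃ e ∈ E, e ^ p = algebraMap k L x)
    {ι : Type*} {b : ι → L} (hb : LinearIndependent E b) :
    LinearIndependent k fun i ↦ b i ^ p := by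
  choose root root_mem root_pow using hE
  refine hb.map_of_injective_injectiveₛ (fun x ↦ ⟨root x, root_mem x⟩)
    (frobenius L p).toAddMonoidHom (fun x y hxy ↦ ?_) (frobenius_inj L p) fun x m ↦ ?_
  · apply FaithfulSMul.algebraMap_injective k L
    rw [← root_pow, ← root_pow, show root x = root y from congrArg Subtype.val hxy]
  · simp [Algebra.smul_def, mul_pow, root_pow, frobenius_def]

theorem LinearIndependent.pow_mul_of_pth_roots (hE : ∀ x : k, ∃ e ∈ E, e ^ p = algebraMap k L x)
    {ι ι' : Type*} {b : ι → L} {s : ι' → L}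
    (hb : LinearIndependent E b) (hs : LinearIndependent (frobenius L p).fieldRange s) :
    LinearIndependent k fun ij : ι × ι' ↦ b ij.1 ^ p * s ij.2 := by
  let F := (frobenius L p).fieldRange.toIntermediateField fun x ↦
    let ⟨e, _, he⟩ := hE x; ⟨e, he⟩
  have hbF : LinearIndependent k fun i ↦ (⟨b i ^ p, b i, rfl⟩ : F) :=
    .of_comp (F.val.toLinearMap.restrictScalars k) (hb.pow_of_pth_roots p hE)
  exact linearIndependent_smul hbF hs

theorem rank_frobeniusRange_le_finrank (hE : ∀ x : k, ∃ e ∈ E, e ^ p = algebraMap k L x)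
    [Algebra.IsAlgebraic E L] [FiniteDimensional k E] :
    Module.rank (frobenius L p).fieldRange L ≤ finrank k E := by
  refine rank_le fun s hs ↦ ?_
  let M := adjoin E (s : Set L)
  have : FiniteDimensional E M :=
    finiteDimensional_adjoin fun x _ ↦ Algebra.IsIntegral.isIntegral x
  let B := finBasis E M
  have hB : LinearIndependent E fun i ↦ (B i : L) :=
    B.linearIndependent.map' M.val.toLinearMap (LinearMap.ker_eq_bot.2 Subtype.val_injective)
  have hmem (ij : Fin (finrank E M) × s) : (B ij.1 : L) ^ p * ij.2 ∈ M :=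
    mul_mem (pow_mem (B ij.1).2 p) (subset_adjoin E _ ij.2.2)
  have hind : LinearIndependent k fun ij ↦ (⟨_, hmem ij⟩ : M) :=
    .of_comp (M.val.toLinearMap.restrictScalars k) (hB.pow_mul_of_pth_roots p hE hs)
  have : FiniteDimensional k M := .trans k E M
  have hcard := hind.fintype_card_le_finrank
  rw [Fintype.card_prod, Fintype.card_fin, Fintype.card_coe,
    ← finrank_mul_finrank k E M, mul_comm] at hcard
  exact Nat.le_of_mul_le_mul_right hcard finrank_pos

end PthRoots

theorem char_le_finrank_frobeniusRange {L : Type*} [Field L] (p : ℕ) [ExpChar L p]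
    [FiniteDimensional (frobenius L p).fieldRange L]
    (h : ¬ Function.Surjective (frobenius L p)) :
    p ≤ finrank (frobenius L p).fieldRange L := by
  have : IsPurelyInseparable (frobenius L p).fieldRange L :=
    (isPurelyInseparable_iff_pow_mem _ p).2 fun x ↦ ⟨1, ⟨x ^ p, x, rfl⟩, by rw [pow_one]; rfl⟩
  obtain ⟨n, hn⟩ := IsPurelyInseparable.finrank_eq_pow (frobenius L p).fieldRange L p
  have hne : finrank (frobenius L p).fieldRange L ≠ 1 := fun h1 ↦ h fun y ↦ by
    obtain ⟨⟨_, x, rfl⟩, hx⟩ := (finrank_eq_one_iff_of_nonzero' (1 : L) one_ne_zero).1 h1 y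
    exact ⟨x, (mul_one _).symm.trans hx⟩
  rw [hn] at hne ⊢
  exact Nat.le_self_pow (by rintro rfl; exact hne (pow_zero p)) p

theorem exists_pow_eq_of_mem_adjoin_pow {K L : Type*} [Field K] [Field L] [Algebra K L]
    (p : ℕ) [ExpChar K p] [PerfectRing K p] [ExpChar L p] {t x : L} (hx : x ∈ K⟮t ^ p⟯) :
    ∃ e ∈ K⟮t⟯, e ^ p = x := by
  let S := (K⟮t⟯.toSubfield.map (frobenius L p)).toIntermediateField fun c ↦
    ⟨algebraMap K L ((frobeniusEquiv K p).symm c), algebraMap_mem _ _, by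
      rw [← RingHom.map_frobenius, ← frobeniusEquiv_apply, RingEquiv.apply_symm_apply]⟩
  have hS : K⟮t ^ p⟯ ≤ S := adjoin_simple_le_iff.2 ⟨t, mem_adjoin_simple_self K t, rfl⟩
  exact hS hx

theorem finrank_adjoin_simple_le_of_pow_eq {F L : Type*} [Field F] [Field L] [Algebra F L]
    {x : L} {n : ℕ} (hn : n ≠ 0) {a : F} (hx : x ^ n = algebraMap F L a) :
    finrank F F⟮x⟯ ≤ n := by
  have hroot : aeval x (X ^ n - C a) = 0 := by simp [hx]
  have hmonic : (X ^ n - C a).Monic := monic_X_pow_sub_C a hn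
  rw [adjoin.finrank ⟨_, hmonic, hroot⟩, ← natDegree_X_pow_sub_C (n := n) (r := a)]
  exact natDegree_le_of_dvd (minpoly.dvd F x hroot) hmonic.ne_zero

/-- Let `K` be a perfect field of characteristic `p > 0` and `L` a field extension of
`K` of transcendence degree `1` (i.e. admitting a transcendence basis consisting of a
single element). If `L` is not perfect, then `[L : L^p] = p`, where `L^p` is the image
of `L` under the Frobenius `x ↦ x^p`. -/
theorem finrank_over_frobenius_range_eq_char (p : ℕ) [Fact p.Prime]
    {K L : Type*} [Field K] [Field L] [Algebra K L]
    [CharP K p] [CharP L p] [PerfectRing K p]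
    (htr : ∃ t : L, IsTranscendenceBasis K (fun _ : Fin 1 => t))
    (hnotperf : ¬ Function.Surjective (frobenius L p)) :
    Module.finrank ↥((frobenius L p).fieldRange) L = p := by
  obtain ⟨t, ht⟩ := htr
  have halg : Algebra.IsAlgebraic K⟮t⟯ L := by
    have h := ht.isAlgebraic_field
    rwa [Set.range_const] at h
  have hle : K⟮t ^ p⟯ ≤ K⟮t⟯ := adjoin_simple_le_iff.2 (pow_mem (mem_adjoin_simple_self K t) p)
  have htp : t ^ p = algebraMap K⟮t ^ p⟯ L ⟨t ^ p, mem_adjoin_simple_self K _⟩ := rfl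
  have : Algebra.IsAlgebraic (extendScalars hle) L := halg
  have : FiniteDimensional K⟮t ^ p⟯ (extendScalars hle) := by
    rw [extendScalars_adjoin]
    exact adjoin.finiteDimensional <| .of_pow (expChar_pos L p) (htp ▸ isIntegral_algebraMap)
  have hdeg : finrank K⟮t ^ p⟯ (extendScalars hle) ≤ p := by
    rw [extendScalars_adjoin]
    exact finrank_adjoin_simple_le_of_pow_eq (expChar_pos L p).ne' htp
  have hroots (x : K⟮t ^ p⟯) : ∃ e ∈ extendScalars hle, e ^ p = algebraMap K⟮t ^ p⟯ L x := by
    simpa only [mem_extendScalars, IntermediateField.algebraMap_apply] using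
      exists_pow_eq_of_mem_adjoin_pow (K := K) p x.2
  have hrank : Module.rank (frobenius L p).fieldRange L ≤ p :=
    (rank_frobeniusRange_le_finrank p hroots).trans (by exact_mod_cast hdeg)
  have : FiniteDimensional (frobenius L p).fieldRange L :=
    rank_lt_aleph0_iff.1 (hrank.trans_lt Cardinal.natCast_lt_aleph0)
  exact (finrank_le_of_rank_le hrank).antisymm (char_le_finrank_frobeniusRange p hnotperf)
end

section
/- Let Ω be an algebraically closed field, E a subfield of Ω, and a = (a₁,…,a_n) a tuple of elements of Ω each of which is separably algebraic over E. Let S be the orbit of a under the group of E-automorphisms of Ω acting coordinatewise. Then S is finite, and every coefficient of the polynomial ∏_{s ∈ S} (X₀ + s₁X₁ + ⋯ + s_nX_n), regarded as a polynomial in the n+1 variables X₀, X₁, …, X_n with coefficients in Ω, lies in E. -/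
/-!
Every `E`-automorphism `g` of `Ω` permutes the orbit, so it fixes the code polynomial and hence
each of its coefficients. The orbit is finite because its coordinates are roots of the minimal
polynomials of the `aᵢ`, and the coefficients are separable over `E` because they are polynomial
in separable elements. A separable element `c` fixed by `Aut(Ω/E)` lies in `E`: `c` lies in the
splitting field `L` of its minimal polynomial, which is Galois over `E`, and every automorphism
of `L` extends to `Ω`, so `c` is fixed by `Gal(L/E)`.
-/

open MvPolynomial

-- `Ω` is an algebraic closure of `L(s)` for a transcendence basis `s`, and `σ` extends to `L(s)`
-- by acting on the coefficients of polynomials in `s`.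
theorem Subfield.exists_ringEquiv_extend {Ω : Type*} [Field Ω] [IsAlgClosed Ω]
    (L : Subfield Ω) (σ : L ≃+* L) : ∃ g : Ω ≃+* Ω, ∀ x : L, g x = σ x := by
  obtain ⟨s, hs⟩ := exists_isTranscendenceBasis L Ω
  let A := Algebra.adjoin L (Set.range ((↑) : s → Ω))
  have : IsAlgClosure A Ω := IsAlgClosed.isAlgClosure_of_transcendence_basis _ hs
  let e : A ≃+* A :=
    hs.1.aevalEquiv.symm.toRingEquiv.trans ((mapEquiv _ σ).trans hs.1.aevalEquiv.toRingEquiv)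
  have he (x : L) : e (algebraMap L A x) = algebraMap L A (σ x) := by
    change hs.1.aevalEquiv (mapEquiv _ σ (hs.1.aevalEquiv.symm (algebraMap L A x))) = _
    rw [AlgEquiv.commutes, algebraMap_eq, mapEquiv_apply, map_C, ← algebraMap_eq,
      AlgEquiv.commutes]
    rfl
  refine ⟨IsAlgClosure.equivOfEquiv Ω Ω e, fun x => ?_⟩
  have := IsAlgClosure.equivOfEquiv_algebraMap Ω Ω e (algebraMap L A x)
  rwa [he] at this

theorem IntermediateField.exists_algEquiv_extend {K Ω : Type*} [Field K] [Field Ω]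
    [IsAlgClosed Ω] [Algebra K Ω] (L : IntermediateField K Ω) (σ : L ≃ₐ[K] L) :
    ∃ g : Ω ≃ₐ[K] Ω, ∀ x : L, g x = σ x := by
  obtain ⟨g, hg⟩ := L.toSubfield.exists_ringEquiv_extend σ.toRingEquiv
  refine ⟨AlgEquiv.ofRingEquiv (f := g) fun c => ?_, hg⟩
  simpa using hg (algebraMap K L c)

theorem IsSeparable.mem_range_algebraMap_of_forall_algEquiv_apply_eq {K Ω : Type*}
    [Field K] [Field Ω] [IsAlgClosed Ω] [Algebra K Ω] {x : Ω} (hx : IsSeparable K x)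
    (hfix : ∀ g : Ω ≃ₐ[K] Ω, g x = x) : x ∈ Set.range (algebraMap K Ω) := by
  let L := IntermediateField.adjoin K ((minpoly K x).rootSet Ω)
  have : (minpoly K x).IsSplittingField K L :=
    IntermediateField.adjoin_rootSet_isSplittingField (IsAlgClosed.splits _)
  have : IsGalois K L := IsGalois.of_separable_splitting_field hx
  have hxL : x ∈ L := IntermediateField.subset_adjoin _ _ <|
    (minpoly K x).mem_rootSet.2 ⟨minpoly.ne_zero hx.isIntegral, minpoly.aeval K x⟩
  have hfixL (τ : L ≃ₐ[K] L) : τ ⟨x, hxL⟩ = ⟨x, hxL⟩ := by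
    obtain ⟨g, hg⟩ := L.exists_algEquiv_extend τ
    exact Subtype.ext ((hg _).symm.trans (hfix g))
  obtain ⟨c, hc⟩ := (InfiniteGalois.mem_range_algebraMap_iff_fixed _).2 hfixL
  exact ⟨c, congrArg Subtype.val hc⟩

theorem setOf_ringEquiv_fixing_eq_orbit {Ω ι : Type*} [Field Ω] (E : Subfield Ω)
    (a : ι → Ω) :
    {s : ι → Ω | ∃ g : Ω ≃+* Ω, (∀ x ∈ E, g x = x) ∧ ∀ i, s i = g (a i)} =
      MulAction.orbit (Ω ≃ₐ[E] Ω) a := by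
  ext s
  constructor
  · rintro ⟨g, hg, hs⟩
    exact ⟨AlgEquiv.ofRingEquiv (f := g) fun x => hg x x.2, funext fun i => (hs i).symm⟩
  · rintro ⟨g, rfl⟩
    exact ⟨g.toRingEquiv, fun x hx => g.commutes ⟨x, hx⟩, fun i => rfl⟩

theorem finite_orbit_of_isIntegral {K L ι : Type*} [Field K] [Field L] [Algebra K L]
    [Finite ι] {a : ι → L} (ha : ∀ i, IsIntegral K (a i)) :
    (MulAction.orbit (L ≃ₐ[K] L) a).Finite := by
  refine (Set.Finite.pi' fun i => (minpoly K (a i)).rootSet_finite L).subset ?_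
  rintro _ ⟨g, rfl⟩ i
  exact (minpoly K (a i)).mem_rootSet.2
    ⟨minpoly.ne_zero (ha i), by simp [Polynomial.aeval_algEquiv]⟩

section CodePolynomial

variable {R : Type*} [CommRing R] {n : ℕ}

noncomputable def codePoly (T : Finset (Fin n → R)) : MvPolynomial (Fin (n + 1)) R :=
  ∏ s ∈ T, (X 0 + ∑ i : Fin n, C (s i) * X i.succ)

theorem map_codePoly_of_forall_mem (f : R ≃+* R) {T : Finset (Fin n → R)}
    (hT : ∀ s ∈ T, f ∘ s ∈ T) : map (f : R →+* R) (codePoly T) = codePoly T := by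
  classical
  have hinj : Function.Injective (f ∘ · : (Fin n → R) → Fin n → R) := f.injective.comp_left
  have himage : T.image (f ∘ ·) = T :=
    Finset.eq_of_subset_of_card_le (Finset.image_subset_iff.2 hT)
      (Finset.card_image_of_injective _ hinj).ge
  conv_rhs => rw [← himage]
  rw [codePoly, codePoly, map_prod, Finset.prod_image fun s _ t _ h => hinj h]
  simp

theorem coeff_codePoly_mem (A : Subring R) {T : Finset (Fin n → R)}
    (hT : ∀ s ∈ T, ∀ i, s i ∈ A) (d : Fin (n + 1) →₀ ℕ) :
    coeff d (codePoly T) ∈ A := by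
  have : codePoly T ∈ (map A.subtype).range :=
    prod_mem fun s hs => add_mem ⟨X 0, map_X _ _⟩ <| sum_mem fun i _ =>
      ⟨C ⟨s i, hT s hs i⟩ * X i.succ, by simp⟩
  obtain ⟨p, hp⟩ := this
  rw [← hp, coeff_map]
  exact (coeff d p).2

end CodePolynomial

/-- Let `Ω` be an algebraically closed field, `E` a subfield, and `a = (a₁,…,aₙ)` a
tuple of elements of `Ω`, each separably algebraic over `E`.  Then the orbit `S` of `a`
under the group of `E`-automorphisms of `Ω` (acting coordinatewise) is finite, and
every coefficient of the polynomial `∏_{s ∈ S} (X₀ + s₁X₁ + ⋯ + sₙXₙ)` lies in `E`. -/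
theorem code_mem_base_of_separable {Ω : Type*} [Field Ω] [IsAlgClosed Ω]
    (E : Subfield Ω) (n : ℕ) (a : Fin n → Ω) (ha : ∀ i, IsSeparable ↥E (a i)) :
    ∃ hS : {s : Fin n → Ω |
        ∃ g : Ω ≃+* Ω, (∀ x ∈ E, g x = x) ∧ ∀ i, s i = g (a i)}.Finite,
      ∀ d : Fin (n + 1) →₀ ℕ,
        MvPolynomial.coeff d
          (∏ s ∈ hS.toFinset,
            (X 0 + ∑ i : Fin n, MvPolynomial.C (s i) * X i.succ)) ∈ E := by
  rw [setOf_ringEquiv_fixing_eq_orbit]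
  have hS := finite_orbit_of_isIntegral fun i => (ha i).isIntegral
  refine ⟨hS, fun d => ?_⟩
  have hsep : IsSeparable E (coeff d (codePoly hS.toFinset)) := by
    refine mem_separableClosure_iff.1 <|
      coeff_codePoly_mem (separableClosure E Ω).toSubalgebra.toSubring (fun s hs i => ?_) d
    obtain ⟨g, rfl⟩ := hS.mem_toFinset.1 hs
    exact mem_separableClosure_iff.2 ((ha i).map g.toAlgHom g.injective)
  have hfix (g : Ω ≃ₐ[E] Ω) :
      g (coeff d (codePoly hS.toFinset)) = coeff d (codePoly hS.toFinset) := by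
    have hstable : ∀ s ∈ hS.toFinset, g ∘ s ∈ hS.toFinset := fun s hs =>
      hS.mem_toFinset.2 (MulAction.mem_orbit_of_mem_orbit g (hS.mem_toFinset.1 hs))
    exact (coeff_map _ _ _).symm.trans
      (congrArg (coeff d) (map_codePoly_of_forall_mem g.toRingEquiv hstable))
  obtain ⟨y, hy⟩ := hsep.mem_range_algebraMap_of_forall_algEquiv_apply_eq hfix
  exact hy ▸ y.2
end

section
/- Let U be a field with a ring automorphism σ and K a subfield of U with σ(K) = K. Let a = (a₁,…,a_n) be a tuple of elements of U such that each σ(a_j) is algebraic over K(a). Then for every k ≥ 0 the extension K(a,σ(a),…,σ^{k+1}(a)) / K(a,σ(a),…,σ^k(a)) is finite, and the sequence of degrees d_k = [K(a,σ(a),…,σ^{k+1}(a)) : K(a,σ(a),…,σ^k(a))] is nonincreasing in k (hence eventually constant). -/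
/-- The subfield `K(a, σ(a), …, σᵏ(a))` of `U` generated by `K` and the first `k + 1`
transforms of the tuple `a` under `σ`. -/
def segField {U : Type*} [Field U] (K : Subfield U) (σ : U ≃+* U) {n : ℕ}
    (a : Fin n → U) (k : ℕ) : Subfield U :=
  Subfield.closure ((K : Set U) ∪ {x | ∃ j ≤ k, ∃ i, x = (⇑σ)^[j] (a i)})

/-- The degree `[F : E]` of an extension of subfields of a field (equal to `0` if
`E ≰ F` or if the extension is infinite). -/
noncomputable def fieldDeg {Ω : Type*} [Field Ω] (E F : Subfield Ω) : ℕ :=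
  letI := Classical.dec (E ≤ F)
  if h : E ≤ F then
    letI := (Subfield.inclusion h).toAlgebra
    Module.finrank ↥E ↥F
  else 0

/-- `F` is a finite extension of the subfield `E`. -/
def fieldFinite {Ω : Type*} [Field Ω] (E F : Subfield Ω) : Prop :=
  ∃ h : E ≤ F,
    letI := (Subfield.inclusion h).toAlgebra
    FiniteDimensional ↥E ↥F

/-!
Write `Eₖ` for `K(a, σ(a), …, σᵏ(a))`. Since `σ(K) = K`, `Eₖ₊₁ = Eₖ ⊔ σ(Eₖ)`, so `Eₖ₊₂` is
the compositum of `Eₖ₊₁` with `σ(Eₖ₊₁)`. The latter is an extension of `σ(Eₖ) ≤ Eₖ₊₁` of degree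
`[Eₖ₊₁ : Eₖ]`, and lifting a finite extension to a larger base does not increase its degree;
hence `[Eₖ₊₂ : Eₖ₊₁] ≤ [Eₖ₊₁ : Eₖ]`. Finiteness of `[E₁ : E₀]` is the algebraicity of the
finitely many `σ(aᵢ)` over `E₀`, and propagates along the chain by the same inequality.
-/

open Cardinal

namespace Subfield

variable {U : Type*} [Field U]

theorem range_algebraMap (E : Subfield U) : Set.range (algebraMap E U) = E :=
  Subtype.range_coe

theorem relrank_sup_le_of_le {E E' F : Subfield U} (hEE' : E ≤ E') (hEF : E ≤ F)
    (hfin : relrank E F < ℵ₀) : relrank E' (E' ⊔ F) ≤ relrank E F := by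
  rw [relrank_eq_rank_of_le hEF] at hfin ⊢
  rw [relrank_eq_rank_of_le (le_sup_left : E' ≤ E' ⊔ F)]
  let : Algebra E E' := (inclusion hEE').toAlgebra
  have : IsScalarTower E E' U := IsScalarTower.of_algebraMap_eq' rfl
  have : Module.Finite E (extendScalars hEF) := Module.rank_lt_aleph0_iff.mp hfin
  have hsup : extendScalars (le_sup_left : E' ≤ E' ⊔ F) =
      IntermediateField.adjoin E' (extendScalars hEF : Set U) := by
    apply IntermediateField.toSubfield_injective
    rw [IntermediateField.adjoin_toSubfield, extendScalars_toSubfield, coe_extendScalars,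
      range_algebraMap, closure_union, closure_eq, closure_eq]
  rw [hsup]
  exact IntermediateField.adjoin_rank_le_of_isAlgebraic_right E' _

theorem relrank_sup_closure_lt_aleph0 (E : Subfield U) {s : Set U} (hs : s.Finite)
    (halg : ∀ x ∈ s, IsAlgebraic E x) : relrank E (E ⊔ closure s) < ℵ₀ := by
  have hadj : extendScalars (le_sup_left : E ≤ E ⊔ closure s) = IntermediateField.adjoin E s := by
    apply IntermediateField.toSubfield_injective
    rw [IntermediateField.adjoin_toSubfield, extendScalars_toSubfield, range_algebraMap,
      closure_union, closure_eq]
  have := hs.to_subtype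
  have : FiniteDimensional E (IntermediateField.adjoin E s) :=
    IntermediateField.finiteDimensional_adjoin fun x hx => (halg x hx).isIntegral
  rw [relrank_eq_rank_of_le le_sup_left, hadj]
  exact Module.rank_lt_aleph0 _ _

variable {E : ℕ → Subfield U} {f : U →+* U}

theorem relrank_succ_le_of_eq_sup_map (hE : ∀ k, E (k + 1) = E k ⊔ (E k).map f) {k : ℕ}
    (hk : relrank (E k) (E (k + 1)) < ℵ₀) :
    relrank (E (k + 1)) (E (k + 2)) ≤ relrank (E k) (E (k + 1)) := by
  have hmap : (E k).map f ≤ (E (k + 1)).map f := (gc_map_comap f).monotone_l (hE k ▸ le_sup_left)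
  calc relrank (E (k + 1)) (E (k + 2))
      = relrank (E (k + 1)) (E (k + 1) ⊔ (E (k + 1)).map f) := by rw [hE (k + 1)]
    _ ≤ relrank ((E k).map f) ((E (k + 1)).map f) :=
      relrank_sup_le_of_le (hE k ▸ le_sup_right) hmap (by rwa [relrank_map_map])
    _ = relrank (E k) (E (k + 1)) := relrank_map_map _ _ f

theorem relrank_lt_aleph0_of_eq_sup_map (hE : ∀ k, E (k + 1) = E k ⊔ (E k).map f)
    (h₀ : relrank (E 0) (E 1) < ℵ₀) (k : ℕ) : relrank (E k) (E (k + 1)) < ℵ₀ := by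
  induction k with
  | zero => exact h₀
  | succ k ih => exact (relrank_succ_le_of_eq_sup_map hE ih).trans_lt ih

end Subfield

theorem fieldDeg_eq_toNat_relrank {Ω : Type*} [Field Ω] {E F : Subfield Ω} (h : E ≤ F) :
    fieldDeg E F = toNat (E.relrank F) := by
  rw [Subfield.relrank_eq_rank_of_le h, fieldDeg, dif_pos h]
  rfl

theorem fieldFinite_of_relrank_lt_aleph0 {Ω : Type*} [Field Ω] {E F : Subfield Ω} (h : E ≤ F)
    (hfin : E.relrank F < ℵ₀) : fieldFinite E F := by
  rw [Subfield.relrank_eq_rank_of_le h] at hfin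
  let := (Subfield.inclusion h).toAlgebra
  exact ⟨h, Module.rank_lt_aleph0_iff.mp hfin⟩

section

variable {U : Type*} [Field U] {K : Subfield U} {σ : U ≃+* U} {n : ℕ} (a : Fin n → U)

theorem segField_succ (hK : K.map (σ : U →+* U) = K) (k : ℕ) :
    segField K σ a (k + 1) = segField K σ a k ⊔ (segField K σ a k).map (σ : U →+* U) := by
  have hKσ : (σ : U →+* U) '' K = K := congrArg SetLike.coe hK
  rw [segField, segField, RingHom.map_field_closure, ← Subfield.closure_union, Set.image_union, hKσ]
  congr 1
  ext x
  constructor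
  · rintro (hx | ⟨_ | j, hj, i, rfl⟩)
    · exact Or.inl (Or.inl hx)
    · exact Or.inl (Or.inr ⟨0, k.zero_le, i, rfl⟩)
    · exact Or.inr (Or.inr ⟨_, ⟨j, by omega, i, rfl⟩, (Function.iterate_succ_apply' _ _ _).symm⟩)
  · rintro ((hx | ⟨j, hj, i, rfl⟩) | (hx | ⟨_, ⟨j, hj, i, rfl⟩, rfl⟩))
    · exact Or.inl hx
    · exact Or.inr ⟨j, by omega, i, rfl⟩
    · exact Or.inl hx
    · exact Or.inr ⟨j + 1, by omega, i, (Function.iterate_succ_apply' _ _ _).symm⟩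

theorem segField_one :
    segField K σ a 1 = segField K σ a 0 ⊔ Subfield.closure (Set.range (σ ∘ a)) := by
  rw [segField, segField, ← Subfield.closure_union, Set.union_assoc]
  congr 2
  ext x
  constructor
  · rintro ⟨_ | _ | j, hj, i, rfl⟩
    · exact Or.inl ⟨0, le_rfl, i, rfl⟩
    · exact Or.inr ⟨i, rfl⟩
    · omega
  · rintro (⟨j, hj, i, rfl⟩ | ⟨i, rfl⟩)
    · exact ⟨j, by omega, i, rfl⟩
    · exact ⟨1, le_rfl, i, rfl⟩

end

/-- Let `U` be a field with a ring automorphism `σ`, `K` a subfield with `σ(K) = K`,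
and `a` a tuple in `U` with each `σ(aⱼ)` algebraic over `K(a)`.  Then each extension
`K(a,…,σ^{k+1}(a)) / K(a,…,σᵏ(a))` is finite and the sequence of degrees
`dₖ = [K(a,…,σ^{k+1}(a)) : K(a,…,σᵏ(a))]` is nonincreasing in `k`. -/
theorem limit_degree_sequence_antitone {U : Type*} [Field U] (σ : U ≃+* U)
    (K : Subfield U) (hK : K.map (σ : U →+* U) = K) {n : ℕ} (a : Fin n → U)
    (halg : ∀ i, IsAlgebraic ↥(segField K σ a 0) (σ (a i))) :
    (∀ k, fieldFinite (segField K σ a k) (segField K σ a (k + 1))) ∧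
      ∀ k, fieldDeg (segField K σ a (k + 1)) (segField K σ a (k + 2)) ≤
        fieldDeg (segField K σ a k) (segField K σ a (k + 1)) := by
  have hE := segField_succ a hK
  have hmono (k : ℕ) : segField K σ a k ≤ segField K σ a (k + 1) := hE k ▸ le_sup_left
  have h₀ : (segField K σ a 0).relrank (segField K σ a 1) < ℵ₀ := by
    rw [segField_one]
    exact Subfield.relrank_sup_closure_lt_aleph0 _ (Set.finite_range _)
      (Set.forall_mem_range.mpr halg)
  have hfin := Subfield.relrank_lt_aleph0_of_eq_sup_map hE h₀
  refine ⟨fun k => fieldFinite_of_relrank_lt_aleph0 (hmono k) (hfin k), fun k => ?_⟩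
  rw [fieldDeg_eq_toNat_relrank (hmono _), fieldDeg_eq_toNat_relrank (hmono _)]
  exact toNat_le_toNat (Subfield.relrank_succ_le_of_eq_sup_map hE (hfin k)) (hfin k)
end

section
/- Let U be a field with a ring automorphism σ and K a subfield of U with σ(K) = K. Let a and b be finite tuples of elements of U such that σ(a) is algebraic over K(a) (coordinatewise), σ(b) is algebraic over K(b) (coordinatewise), and b is algebraic over K(a) (coordinatewise). If ld(b/K) = 1, then the compositum K(a,b)_{σ^{±1}} (the subfield generated by K and all σ^i(a_j), σ^i(b_j), i ∈ ℤ) is a finite extension of K(a)_{σ^{±1}}. -/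
/-- The inversive difference subfield `K(a)_{σ^{±1}}` generated by `K` and all
`σ^i(aⱼ)`, `i ∈ ℤ`. -/
def fullField {U : Type*} [Field U] (K : Subfield U) (σ : U ≃+* U) {n : ℕ}
    (a : Fin n → U) : Subfield U :=
  Subfield.closure ((K : Set U) ∪
    {x | ∃ (j : ℕ) (i : Fin n), x = (⇑σ)^[j] (a i) ∨ x = (⇑σ.symm)^[j] (a i)})

/-- The sequence of degrees `dₖ = [K(a,…,σ^{k+1}(a)) : K(a,…,σᵏ(a))]`, whose eventual
value is the limit degree `ld(a/K)`. -/
noncomputable def ldSeq {U : Type*} [Field U] (K : Subfield U) (σ : U ≃+* U) {n : ℕ}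
    (a : Fin n → U) : ℕ → ℕ :=
  fun k => fieldDeg (segField K σ a k) (segField K σ a (k + 1))

/-- `l` is the eventual value of the sequence `d`. -/
def IsEventualValue (d : ℕ → ℕ) (l : ℕ) : Prop :=
  ∃ N, ∀ k ≥ N, d k = l

section

variable {U : Type*} [Field U]

theorem IsAlgebraic.of_subfield_le {E F : Subfield U} (hEF : E ≤ F) {x : U}
    (hx : IsAlgebraic E x) : IsAlgebraic F x :=
  hx.ringHom_of_comp_eq (Subfield.inclusion hEF) (RingHom.id U) (RingHom.injective _) rfl

theorem IsAlgebraic.subfield_map (σ : U ≃+* U) {E : Subfield U} {x : U}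
    (hx : IsAlgebraic E x) : IsAlgebraic (E.map (σ : U →+* U)) (σ x) :=
  hx.ringHom_of_comp_eq ((σ : U →+* U).restrict E _ fun _ => (Subfield.map_mem_map _).2)
    (σ : U →+* U) (RingHom.injective _) rfl

theorem IsAlgebraic.iterate_of_map_eq {E : Subfield U} {σ : U ≃+* U}
    (hE : E.map (σ : U →+* U) = E) {x : U} (hx : IsAlgebraic E x) (j : ℕ) :
    IsAlgebraic E ((⇑σ)^[j] x) := by
  induction j with
  | zero => exact hx
  | succ j ih =>
    rw [Function.iterate_succ_apply']
    exact hE ▸ ih.subfield_map σ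

theorem Subfield.map_symm_eq_of_map_eq {σ : U ≃+* U} {S : Subfield U}
    (h : S.map (σ : U →+* U) = S) : S.map (σ.symm : U →+* U) = S := by
  conv_lhs => rw [← h]
  rw [Subfield.map_map]
  ext x
  simp

theorem Subfield.mapsTo_of_map_le {σ : U ≃+* U} {S : Subfield U}
    (h : S.map (σ : U →+* U) ≤ S) : Set.MapsTo σ S S :=
  fun _ hx => h ((Subfield.map_mem_map _).2 hx)

theorem IntermediateField.le_toSubfield {E : Subfield U} (T : IntermediateField E U) :
    E ≤ T.toSubfield :=
  fun x hx => T.algebraMap_mem ⟨x, hx⟩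

theorem IntermediateField.toSubfield_map_eq_of_map_le {E : Subfield U} {σ : U ≃+* U}
    (hE : E.map (σ : U →+* U) = E) (T : IntermediateField E U) [FiniteDimensional E T]
    (hT : T.toSubfield.map (σ : U →+* U) ≤ T.toSubfield) :
    T.toSubfield.map (σ : U →+* U) = T.toSubfield := by
  have hET : E ≤ T.toSubfield.map (σ : U →+* U) :=
    hE.symm.trans_le <| (Subfield.gc_map_comap _).monotone_l T.le_toSubfield
  let T' : IntermediateField E U := (T.toSubfield.map (σ : U →+* U)).toIntermediateField
    fun x => hET x.2
  let σE : E ≃+* E := (σ.subringMap (s := E.toSubring)).trans (RingEquiv.subfieldCongr hE)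
  let σT : T ≃+* T' := σ.subringMap (s := T.toSubfield.toSubring)
  have hrank : Module.rank E T = Module.rank E T' :=
    Algebra.rank_eq_of_equiv_equiv σE σT (RingHom.ext fun _ => rfl)
  have hT' : T' = T :=
    IntermediateField.eq_of_le_of_finrank_le hT (by simp only [Module.finrank, hrank, le_refl])
  exact congrArg IntermediateField.toSubfield hT'

theorem fieldFinite_of_finiteDimensional {E : Subfield U} (T : IntermediateField E U)
    [FiniteDimensional E T] : fieldFinite E T.toSubfield :=
  ⟨T.le_toSubfield, ‹FiniteDimensional E T›⟩

theorem fieldDeg_eq_relfinrank {E F : Subfield U} (h : E ≤ F) :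
    fieldDeg E F = E.relfinrank F := by
  rw [fieldDeg, dif_pos h, Subfield.relfinrank_eq_finrank_of_le h]
  rfl

theorem le_of_fieldDeg_eq_one {E F : Subfield U} (h : fieldDeg E F = 1) : F ≤ E := by
  by_cases hEF : E ≤ F
  · rwa [fieldDeg_eq_relfinrank hEF, Subfield.relfinrank_eq_one_iff] at h
  · simp [fieldDeg, hEF] at h

theorem fullField_symm (K : Subfield U) (σ : U ≃+* U) {n : ℕ} (c : Fin n → U) :
    fullField K σ.symm c = fullField K σ c := by
  simp only [fullField, RingEquiv.symm_symm, or_comm]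

theorem fullField_map_le {K : Subfield U} {σ : U ≃+* U} (hK : K.map (σ : U →+* U) = K)
    {n : ℕ} (c : Fin n → U) : (fullField K σ c).map (σ : U →+* U) ≤ fullField K σ c := by
  rw [fullField, RingHom.map_field_closure, Subfield.closure_le]
  rintro _ ⟨y, hy | ⟨j, i, rfl | rfl⟩, rfl⟩
  · exact Subfield.subset_closure (Or.inl (hK ▸ (Subfield.map_mem_map _).2 hy))
  · refine Subfield.subset_closure (Or.inr ⟨j + 1, i, Or.inl ?_⟩)
    rw [Function.iterate_succ_apply']
    rfl
  · cases j with
    | zero => exact Subfield.subset_closure (Or.inr ⟨1, i, Or.inl rfl⟩)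
    | succ j =>
      refine Subfield.subset_closure (Or.inr ⟨j, i, Or.inr ?_⟩)
      simp [Function.iterate_succ_apply']

theorem fullField_map_eq {K : Subfield U} {σ : U ≃+* U} (hK : K.map (σ : U →+* U) = K)
    {n : ℕ} (c : Fin n → U) : (fullField K σ c).map (σ : U →+* U) = fullField K σ c := by
  refine (fullField_map_le hK c).antisymm fun x hx => ?_
  have hx' : σ.symm x ∈ fullField K σ c := by
    rw [← fullField_symm] at hx ⊢
    exact fullField_map_le (Subfield.map_symm_eq_of_map_eq hK) c
      ((Subfield.map_mem_map _).2 hx)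
  simpa using (Subfield.map_mem_map (σ : U →+* U)).2 hx'

theorem fullField_le {K S : Subfield U} {σ : U ≃+* U} (hS : S.map (σ : U →+* U) = S)
    (hKS : K ≤ S) {n : ℕ} {c : Fin n → U} (hc : ∀ i, c i ∈ S) : fullField K σ c ≤ S := by
  have hσ := Subfield.mapsTo_of_map_le hS.le
  have hσ' := Subfield.mapsTo_of_map_le (Subfield.map_symm_eq_of_map_eq hS).le
  rw [fullField, Subfield.closure_le]
  rintro _ (hx | ⟨j, i, rfl | rfl⟩)
  exacts [hKS hx, hσ.iterate j (hc i), hσ'.iterate j (hc i)]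

theorem segField_le_fullField (K : Subfield U) (σ : U ≃+* U) {n : ℕ} (c : Fin n → U)
    (k : ℕ) : segField K σ c k ≤ fullField K σ c :=
  Subfield.closure_mono <| Set.union_subset_union_right _ fun _ ⟨j, _, i, hx⟩ =>
    ⟨j, i, Or.inl hx⟩

/-- `segField K σ c k` is, by definition, `Subfield.closure (K ∪ segGens σ c k)`. -/
def segGens (σ : U ≃+* U) {n : ℕ} (c : Fin n → U) (k : ℕ) : Set U :=
  {x | ∃ j ≤ k, ∃ i, x = (⇑σ)^[j] (c i)}

theorem segGens_finite (σ : U ≃+* U) {n : ℕ} (c : Fin n → U) (k : ℕ) :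
    (segGens σ c k).Finite :=
  (Set.finite_range fun p : Fin (k + 1) × Fin n => (⇑σ)^[p.1] (c p.2)).subset <| by
    rintro _ ⟨j, hj, i, rfl⟩
    exact ⟨(⟨j, Nat.lt_succ_of_le hj⟩, i), rfl⟩

theorem image_segGens_subset (σ : U ≃+* U) {n : ℕ} (c : Fin n → U) (k : ℕ) :
    σ '' segGens σ c k ⊆ segGens σ c (k + 1) := by
  rintro _ ⟨_, ⟨j, hj, i, rfl⟩, rfl⟩
  exact ⟨j + 1, by omega, i, (Function.iterate_succ_apply' _ _ _).symm⟩

theorem finiteDimensional_adjoin_segGens {E : Subfield U} {σ : U ≃+* U}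
    (hE : E.map (σ : U →+* U) = E) {n : ℕ} {c : Fin n → U} (hc : ∀ i, IsAlgebraic E (c i))
    (k : ℕ) : FiniteDimensional E (IntermediateField.adjoin E (segGens σ c k)) := by
  have := (segGens_finite σ c k).to_subtype
  refine IntermediateField.finiteDimensional_adjoin ?_
  rintro _ ⟨j, -, i, rfl⟩
  exact ((hc i).iterate_of_map_eq hE j).isIntegral

theorem adjoin_segGens_map_le {K E : Subfield U} {σ : U ≃+* U}
    (hE : E.map (σ : U →+* U) = E) (hKE : K ≤ E) {n : ℕ} {c : Fin n → U} {k : ℕ}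
    (hk : segField K σ c (k + 1) ≤ segField K σ c k) :
    (IntermediateField.adjoin E (segGens σ c k)).toSubfield.map (σ : U →+* U) ≤
      (IntermediateField.adjoin E (segGens σ c k)).toSubfield := by
  set T := IntermediateField.adjoin E (segGens σ c k)
  have hseg : segField K σ c k ≤ T.toSubfield :=
    Subfield.closure_le.2 <| Set.union_subset (hKE.trans T.le_toSubfield)
      (IntermediateField.subset_adjoin E _)
  rw [IntermediateField.adjoin_toSubfield, RingHom.map_field_closure, Subfield.closure_le,
    Set.image_union]
  refine Set.union_subset ?_ ?_
  · rintro _ ⟨_, ⟨y, rfl⟩, rfl⟩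
    exact T.le_toSubfield (Subfield.mapsTo_of_map_le hE.le y.2)
  · exact (image_segGens_subset σ c k).trans fun x hx =>
      hseg (hk (Subfield.subset_closure (Or.inr hx)))

end

theorem finite_of_limit_degree_one_general {U : Type*} [Field U] (σ : U ≃+* U)
    (K : Subfield U) (hK : K.map (σ : U →+* U) = K) {n m : ℕ}
    (a : Fin n → U) (b : Fin m → U)
    (hba : ∀ i, IsAlgebraic ↥(segField K σ a 0) (b i))
    (hld : IsEventualValue (ldSeq K σ b) 1) :
    fieldFinite (fullField K σ a) (fullField K σ a ⊔ fullField K σ b) := by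
  obtain ⟨N, hN⟩ := hld
  set E := fullField K σ a
  have hE : E.map (σ : U →+* U) = E := fullField_map_eq hK a
  have hKE : K ≤ E := fun x hx => Subfield.subset_closure (Or.inl hx)
  have hbE : ∀ i, IsAlgebraic E (b i) :=
    fun i => (hba i).of_subfield_le (segField_le_fullField K σ a 0)
  set T := IntermediateField.adjoin E (segGens σ b N)
  have := finiteDimensional_adjoin_segGens hE hbE N
  have hσT : T.toSubfield.map (σ : U →+* U) = T.toSubfield :=
    T.toSubfield_map_eq_of_map_le hE <|
      adjoin_segGens_map_le hE hKE (le_of_fieldDeg_eq_one (hN N le_rfl))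
  have hbT : ∀ i, b i ∈ T :=
    fun i => IntermediateField.subset_adjoin _ _ ⟨0, N.zero_le, i, rfl⟩
  have hsup : E ⊔ fullField K σ b = T.toSubfield := by
    refine le_antisymm ?_ ?_
    · exact sup_le T.le_toSubfield (fullField_le hσT (hKE.trans T.le_toSubfield) hbT)
    · rw [IntermediateField.adjoin_toSubfield, Subfield.closure_le]
      rintro _ (⟨x, rfl⟩ | ⟨j, -, i, rfl⟩)
      · exact le_sup_left (a := E) x.2
      · exact le_sup_right (a := E) (Subfield.subset_closure (Or.inr ⟨j, i, Or.inl rfl⟩))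
  rw [hsup]
  exact fieldFinite_of_finiteDimensional T

/-- Let `U` be a field with a ring automorphism `σ` and `K` a subfield with
`σ(K) = K`.  Let `a`, `b` be tuples with `σ(a)` algebraic over `K(a)`, `σ(b)` algebraic
over `K(b)`, and `b` algebraic over `K(a)`.  If `ld(b/K) = 1` then `K(a,b)_{σ^{±1}}`
is a finite extension of `K(a)_{σ^{±1}}`. -/
theorem finite_of_limit_degree_one {U : Type*} [Field U] (σ : U ≃+* U)
    (K : Subfield U) (hK : K.map (σ : U →+* U) = K) {n m : ℕ}
    (a : Fin n → U) (b : Fin m → U)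
    (haalg : ∀ i, IsAlgebraic ↥(segField K σ a 0) (σ (a i)))
    (hbalg : ∀ i, IsAlgebraic ↥(segField K σ b 0) (σ (b i)))
    (hba : ∀ i, IsAlgebraic ↥(segField K σ a 0) (b i))
    (hld : IsEventualValue (ldSeq K σ b) 1) :
    fieldFinite (fullField K σ a) (fullField K σ a ⊔ fullField K σ b) :=
  finite_of_limit_degree_one_general σ K hK a b hba hld
end

section
/- Let Ω be a field of characteristic p > 0 and let a, b, t be elements of Ω that are algebraically independent over the prime field F_p. Let K = F_p(a^p, b^p, t, a+bt) be the subfield of Ω generated by a^p, b^p, t and a+bt. Then a ∉ K. -/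
/-!
Write `a, b, t` for the variables `X 0, X 1, X 2` of `𝔽_p[a, b, t]`. The derivation
`t ∂/∂a - ∂/∂b` kills `aᵖ, bᵖ, t` and `a + bt`, hence every polynomial in them. If `a` were in
`K`, algebraic independence would give `a · g = f` with `f, g` polynomials in these four elements
and `g ≠ 0`; applying the derivation yields `t · g = 0`, a contradiction.
-/

open MvPolynomial

theorem Derivation.eq_zero_of_mul_mem_adjoin {R A : Type*} [CommSemiring R] [CommSemiring A]
    [NoZeroDivisors A] [Algebra R A] (D : Derivation R A A) {s : Set A}
    (hs : ∀ y ∈ s, D y = 0) {x g : A} (hx : D x ≠ 0) (hg : g ∈ Algebra.adjoin R s)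
    (hxg : x * g ∈ Algebra.adjoin R s) : g = 0 := by
  have hker : ∀ y ∈ Algebra.adjoin R s, D y = 0 := fun y hy =>
    D.eqOn_adjoin (D2 := 0) hs hy
  have : g * D x = 0 := by
    simpa [hker g hg, mul_comm] using hker _ hxg
  exact (mul_eq_zero.mp this).resolve_right hx

theorem AlgebraicIndependent.exists_mul_mem_adjoin_of_aeval_mem_adjoin {ι R K : Type*}
    [Field R] [Field K] [Algebra R K] {w : ι → K} (hw : AlgebraicIndependent R w)
    {S : Set (MvPolynomial ι R)} {Q : MvPolynomial ι R}
    (hQ : aeval w Q ∈ IntermediateField.adjoin R (aeval w '' S)) :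
    ∃ g ∈ Algebra.adjoin R S, g ≠ 0 ∧ Q * g ∈ Algebra.adjoin R S := by
  have hinj : Function.Injective (aeval w) := algebraicIndependent_iff_injective_aeval.mp hw
  obtain ⟨r, hr, s, hs, hQrs⟩ := IntermediateField.mem_adjoin_iff_div.mp hQ
  rw [← AlgHom.map_adjoin] at hr hs
  obtain ⟨F, hF, rfl⟩ := hr
  obtain ⟨G, hG, rfl⟩ := hs
  by_cases hG0 : G = 0
  · have hQ0 : Q = 0 := hinj (by simpa [hG0] using hQrs)
    exact ⟨1, Subalgebra.one_mem _, one_ne_zero, by simp [hQ0]⟩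
  · have hG0' : aeval w G ≠ 0 := fun h => hG0 (hinj (h.trans (map_zero _).symm))
    refine ⟨G, hG, hG0, ?_⟩
    have hQG : Q * G = F := hinj <| by
      rw [map_mul, hQrs]
      exact div_mul_cancel₀ _ hG0'
    rwa [hQG]

variable (p : ℕ)

noncomputable def shearDerivation :
    Derivation (ZMod p) (MvPolynomial (Fin 3) (ZMod p)) (MvPolynomial (Fin 3) (ZMod p)) :=
  (X 2 : MvPolynomial (Fin 3) (ZMod p)) • pderiv 0 - pderiv 1

theorem shearDerivation_X_zero : shearDerivation p (X 0) = X 2 := by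
  simp [shearDerivation]

theorem shearDerivation_eq_zero :
    ∀ y ∈ ({X 0 ^ p, X 1 ^ p, X 2, X 0 + X 1 * X 2} : Set (MvPolynomial (Fin 3) (ZMod p))),
      shearDerivation p y = 0 := by
  simp [shearDerivation, Derivation.leibniz_pow]

theorem not_mem_field_of_definition_example_general (p : ℕ) [Fact p.Prime]
    {Ω : Type*} [Field Ω] [Algebra (ZMod p) Ω]
    (a b t : Ω) (hind : AlgebraicIndependent (ZMod p) ![a, b, t]) :
    a ∉ Subfield.closure {a ^ p, b ^ p, t, a + b * t} := by
  intro ha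
  set S : Set (MvPolynomial (Fin 3) (ZMod p)) := {X 0 ^ p, X 1 ^ p, X 2, X 0 + X 1 * X 2}
  have hS : aeval ![a, b, t] '' S = {a ^ p, b ^ p, t, a + b * t} := by
    simp [S, Set.image_insert_eq]
  have haK : aeval ![a, b, t] (X 0 : MvPolynomial (Fin 3) (ZMod p)) ∈
      IntermediateField.adjoin (ZMod p) (aeval ![a, b, t] '' S) := by
    rw [hS, aeval_X]
    exact Subfield.closure_le.mpr (IntermediateField.subset_adjoin _ _) ha
  obtain ⟨g, hg, hg0, hXg⟩ := hind.exists_mul_mem_adjoin_of_aeval_mem_adjoin haK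
  refine hg0 ((shearDerivation p).eq_zero_of_mul_mem_adjoin (shearDerivation_eq_zero p) ?_ hg hXg)
  rw [shearDerivation_X_zero]
  exact X_ne_zero 2

/-- Let `Ω` be a field of characteristic `p > 0` and `a, b, t ∈ Ω` algebraically
independent over the prime field `𝔽_p`.  Then `a` does not belong to the subfield
`K = 𝔽_p(aᵖ, bᵖ, t, a + bt)` generated by `aᵖ, bᵖ, t` and `a + bt`. -/
theorem not_mem_field_of_definition_example (p : ℕ) [Fact p.Prime]
    {Ω : Type*} [Field Ω] [CharP Ω p] [Algebra (ZMod p) Ω]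
    (a b t : Ω) (hind : AlgebraicIndependent (ZMod p) ![a, b, t]) :
    a ∉ Subfield.closure {a ^ p, b ^ p, t, a + b * t} :=
  not_mem_field_of_definition_example_general p a b t hind
end

section
/- Let Ω be a field of characteristic p > 0 and let a, b, t be elements of Ω that are algebraically independent over the prime field F_p. Let K = F_p(a^p, b^p, t, a+bt) be the subfield of Ω generated by a^p, b^p, t and a+bt. Then for every subfield E' of K, if E'(a,b) and K are linearly disjoint over E', then E' = K. (That is, K itself is the field of definition of the ideal of polynomials over K vanishing at (a,b).) -/
/-!
Over `K` the elements `a, b, 1` satisfy `a + t b - (a + b t) = 0`, so linear disjointness gives a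
nontrivial relation `d₀ a + d₁ b + d₂ = 0` with `dᵢ ∈ E' ⊆ K`. As `b ∉ K`, it is `d₀` times the
first one, whence `t, a + b t ∈ E'`; and `aᵖ, bᵖ ∈ K ∩ E'(a, b) = E'`, again by linear disjointness.
That `b ∉ K` is seen from the derivation `t ∂/∂a - ∂/∂b` of the polynomial ring `k[a, b, t]` with
`char k = p`: it kills `aᵖ, bᵖ, t, a + b t`, hence every element of `k[a, b, t]` lying in `K`,
but not `b`.
-/

/-- Subsets `A` and `B` of a field `F`, both containing a common subset `C`, are
linearly disjoint over `C` if every finite family of elements of `A` that is linearly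
independent over `C` remains linearly independent over `B`. -/
def LinearlyDisjointOver (F : Type*) [Field F] (C A B : Set F) : Prop :=
  ∀ (n : ℕ) (v : Fin n → F), (∀ i, v i ∈ A) →
    (∀ c : Fin n → F, (∀ i, c i ∈ C) → ∑ i, c i * v i = 0 → ∀ i, c i = 0) →
    ∀ c : Fin n → F, (∀ i, c i ∈ B) → ∑ i, c i * v i = 0 → ∀ i, c i = 0

namespace Derivation

variable {R A : Type*} [CommRing R] [CommRing A] [Algebra R A]

theorem eq_zero_of_mem_subringClosure (D : Derivation R A A) {s : Set A}
    (hs : ∀ x ∈ s, D x = 0) {x : A} (hx : x ∈ Subring.closure s) : D x = 0 :=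
  D.eqOn_adjoin (D2 := 0) hs
    ((Subring.closure_le (t := (Algebra.adjoin R s).toSubring)).mpr Algebra.subset_adjoin hx)

theorem eq_zero_of_map_mem_subfieldClosure {Ω : Type*} [Field Ω] (D : Derivation R A A)
    {s : Set A} (hs : ∀ x ∈ s, D x = 0) {ψ : A →+* Ω} (hψ : Function.Injective ψ) {r : A}
    (hr : ψ r ∈ Subfield.closure (ψ '' s)) : D r = 0 := by
  obtain ⟨_, hy, _, hz, hyz⟩ := Subfield.mem_closure_iff.mp hr
  rw [← RingHom.map_closure] at hy hz
  obtain ⟨F, hF, rfl⟩ := hy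
  obtain ⟨G, hG, rfl⟩ := hz
  by_cases hG0 : ψ G = 0
  · rw [hG0, div_zero, eq_comm, map_eq_zero_iff ψ hψ] at hyz
    rw [hyz, map_zero]
  have hFG : F = r * G := hψ (by rw [map_mul, ← hyz, div_mul_cancel₀ _ hG0])
  have hDF : G * D r = 0 := by
    simpa [hFG, D.leibniz, D.eq_zero_of_mem_subringClosure hs hG] using
      D.eq_zero_of_mem_subringClosure hs hF
  apply hψ
  simpa [hG0] using congrArg ψ hDF

end Derivation

open MvPolynomial in
theorem notMem_subfieldClosure_of_algebraicIndependent {k Ω : Type*} [CommRing k] (p : ℕ)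
    [CharP k p] [Field Ω] [Algebra k Ω] {a b t : Ω} (hind : AlgebraicIndependent k ![a, b, t]) :
    b ∉ Subfield.closure {a ^ p, b ^ p, t, a + b * t} := by
  have : Nontrivial k := (algebraMap k Ω).domain_nontrivial
  let D : Derivation k (MvPolynomial (Fin 3) k) (MvPolynomial (Fin 3) k) :=
    (X 2 : MvPolynomial (Fin 3) k) • pderiv 0 - pderiv 1
  let ψ : MvPolynomial (Fin 3) k →+* Ω := (aeval ![a, b, t]).toRingHom
  have hgen : ψ '' {X 0 ^ p, X 1 ^ p, X 2, X 0 + X 1 * X 2} = {a ^ p, b ^ p, t, a + b * t} := by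
    simp [ψ, Set.image_insert_eq]
  intro hb
  have hDb : D (X 1) = 0 := by
    have hψb : ψ (X 1) = b := by simp [ψ]
    refine D.eq_zero_of_map_mem_subfieldClosure ?_ (ψ := ψ) hind (by rwa [hgen, hψb])
    rintro x (rfl | rfl | rfl | rfl) <;> simp [D]
  simp [D] at hDb

namespace LinearlyDisjointOver

variable {Ω : Type*} [Field Ω]

theorem exists_ne_zero_of_relation {C A B : Set Ω} (h : LinearlyDisjointOver Ω C A B) {n : ℕ}
    {v : Fin n → Ω} (hv : ∀ i, v i ∈ A) {c : Fin n → Ω} (hcB : ∀ i, c i ∈ B)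
    (hc : ∑ i, c i * v i = 0) (hc0 : c ≠ 0) :
    ∃ d : Fin n → Ω, (∀ i, d i ∈ C) ∧ ∑ i, d i * v i = 0 ∧ d ≠ 0 := by
  by_contra! hd
  exact hc0 (funext (h n v hv (fun d hdC hdv => congrFun (hd d hdC hdv)) c hcB hc))

theorem mem_of_mem_of_mem {E L K : Subfield Ω}
    (h : LinearlyDisjointOver Ω (E : Set Ω) (L : Set Ω) (K : Set Ω)) {x : Ω} (hxL : x ∈ L)
    (hxK : x ∈ K) : x ∈ E := by
  obtain ⟨d, hdE, hd, hd_ne⟩ := h.exists_ne_zero_of_relation (v := ![x, 1]) (c := ![1, -x])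
    (by simp [Fin.forall_fin_two, hxL]) (by simp [Fin.forall_fin_two, hxK]) (by simp)
    (by simp [funext_iff, Fin.forall_fin_two])
  simp only [Fin.sum_univ_two, Matrix.cons_val_zero, Matrix.cons_val_one, mul_one] at hd
  have hd₀ : d 0 ≠ 0 := fun h0 ↦
    hd_ne (funext (Fin.forall_fin_two.mpr ⟨h0, by simpa [h0] using hd⟩))
  have hx : x = -d 1 / d 0 := by
    rw [eq_div_iff hd₀]
    linear_combination hd
  exact hx ▸ div_mem (neg_mem (hdE 1)) (hdE 0)

end LinearlyDisjointOver

theorem eq_mul_of_add_mul_add_eq_zero {Ω : Type*} [Field Ω] {K : Subfield Ω} {a b t : Ω}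
    (hb : b ∉ K) (ht : t ∈ K) (hc : a + b * t ∈ K) {d₀ d₁ d₂ : Ω} (h₀ : d₀ ∈ K) (h₁ : d₁ ∈ K)
    (h₂ : d₂ ∈ K) (h : d₀ * a + d₁ * b + d₂ = 0) : d₁ = d₀ * t ∧ d₂ = -(d₀ * (a + b * t)) := by
  have h' : (d₁ - d₀ * t) * b + (d₂ + d₀ * (a + b * t)) = 0 := by linear_combination h
  have hd₁ : d₁ - d₀ * t = 0 := by
    by_contra hne
    refine hb ?_
    have hbeq : b = -(d₂ + d₀ * (a + b * t)) / (d₁ - d₀ * t) := by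
      rw [eq_div_iff hne]
      linear_combination h'
    rw [hbeq]
    exact div_mem (neg_mem (add_mem h₂ (mul_mem h₀ hc))) (sub_mem h₁ (mul_mem h₀ ht))
  refine ⟨sub_eq_zero.mp hd₁, ?_⟩
  rw [hd₁, zero_mul, zero_add] at h'
  exact eq_neg_of_add_eq_zero_left h'

theorem field_of_definition_of_ideal_example_general (p : ℕ)
    {Ω : Type*} [Field Ω] [Algebra (ZMod p) Ω]
    (a b t : Ω) (hind : AlgebraicIndependent (ZMod p) ![a, b, t])
    (E' : Subfield Ω) (hE' : E' ≤ Subfield.closure {a ^ p, b ^ p, t, a + b * t})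
    (hdisj : LinearlyDisjointOver Ω (E' : Set Ω)
      ((E' ⊔ Subfield.closure {a, b} : Subfield Ω) : Set Ω)
      ((Subfield.closure {a ^ p, b ^ p, t, a + b * t} : Subfield Ω) : Set Ω)) :
    E' = Subfield.closure {a ^ p, b ^ p, t, a + b * t} := by
  set K := Subfield.closure {a ^ p, b ^ p, t, a + b * t}
  set L := E' ⊔ Subfield.closure {a, b}
  have haL : a ∈ L := le_sup_right (a := E') (Subfield.subset_closure (by simp))
  have hbL : b ∈ L := le_sup_right (a := E') (Subfield.subset_closure (by simp))
  have hK : {a ^ p, b ^ p, t, a + b * t} ⊆ (K : Set Ω) := Subfield.subset_closure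
  have htK : t ∈ K := hK (by simp)
  have hcK : a + b * t ∈ K := hK (by simp)
  obtain ⟨d, hdE, hd, hd_ne⟩ := hdisj.exists_ne_zero_of_relation (v := ![a, b, 1])
    (c := ![1, t, -(a + b * t)]) (fun i ↦ by fin_cases i; exacts [haL, hbL, one_mem L])
    (fun i ↦ by fin_cases i; exacts [one_mem K, htK, neg_mem hcK])
    (by simp [Fin.sum_univ_three]; ring)
    (by simp [_root_.funext_iff, Fin.forall_fin_succ])
  simp only [Fin.sum_univ_three, Fin.isValue, Matrix.cons_val_zero, Matrix.cons_val_one,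
    Matrix.cons_val, mul_one] at hd
  obtain ⟨hd₁, hd₂⟩ := eq_mul_of_add_mul_add_eq_zero
    (notMem_subfieldClosure_of_algebraicIndependent p hind) htK hcK
    (hE' (hdE 0)) (hE' (hdE 1)) (hE' (hdE 2)) hd
  have hd₀ : d 0 ≠ 0 := fun h0 ↦
    hd_ne (funext (Fin.forall_fin_succ.mpr ⟨h0, by simp [Fin.forall_fin_two, hd₁, hd₂, h0]⟩))
  refine le_antisymm hE' (Subfield.closure_le.mpr ?_)
  rintro x (rfl | rfl | rfl | rfl)
  · exact hdisj.mem_of_mem_of_mem (pow_mem haL p) (hK (by simp))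
  · exact hdisj.mem_of_mem_of_mem (pow_mem hbL p) (hK (by simp))
  · simpa [hd₁, hd₀] using div_mem (hdE 1) (hdE 0)
  · simpa [hd₂, hd₀] using div_mem (neg_mem (hdE 2)) (hdE 0)

/-- Let `Ω` be a field of characteristic `p > 0` and `a, b, t ∈ Ω` algebraically
independent over the prime field `𝔽_p`, and let `K = 𝔽_p(aᵖ, bᵖ, t, a + bt)`.  If
`E'` is a subfield of `K` such that `E'(a,b)` and `K` are linearly disjoint over
`E'`, then `E' = K`; that is, `K` itself is the field of definition of the ideal of
polynomials over `K` vanishing at `(a, b)`. -/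
theorem field_of_definition_of_ideal_example (p : ℕ) [Fact p.Prime]
    {Ω : Type*} [Field Ω] [CharP Ω p] [Algebra (ZMod p) Ω]
    (a b t : Ω) (hind : AlgebraicIndependent (ZMod p) ![a, b, t])
    (E' : Subfield Ω) (hE' : E' ≤ Subfield.closure {a ^ p, b ^ p, t, a + b * t})
    (hdisj : LinearlyDisjointOver Ω (E' : Set Ω)
      ((E' ⊔ Subfield.closure {a, b} : Subfield Ω) : Set Ω)
      ((Subfield.closure {a ^ p, b ^ p, t, a + b * t} : Subfield Ω) : Set Ω)) :
    E' = Subfield.closure {a ^ p, b ^ p, t, a + b * t} :=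
  field_of_definition_of_ideal_example_general p a b t hind E' hE' hdisj
end

section
/- Let L₀ be a field of characteristic p > 0 with [L₀ : L₀^p] = p, where L₀^p is the image of L₀ under the Frobenius map x ↦ x^p, and let L be a purely inseparable algebraic field extension of L₀ with L ≠ L₀. Then L contains L₀^{1/p}, the set of all elements x (in a fixed algebraic closure containing L) with x^p ∈ L₀; in other words, every element of an algebraic closure of L whose p-th power lies in L₀ already lies in L. -/
/-! The elements of `L₀` that acquire a `p`-th root in `L` form a subfield `S` with
`L₀ᵖ ⊆ S ⊆ L₀`. Some `y ∈ L \ L₀` has `yᵖ ∈ L₀`, and `yᵖ ∉ L₀ᵖ` because Frobenius is injective,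
so `S ≠ L₀ᵖ`; as `[L₀ : L₀ᵖ] = p` is prime, `S = L₀`. Hence every `b ∈ L₀` is a `p`-th power in `L`,
and a `p`-th root of `b` in the algebraic closure is unique. -/

open Module

theorem exists_notMem_and_pow_mem_of_pow_pow_mem {M : Type*} [Monoid M] {S : Set M} {q : ℕ}
    {y : M} (hy : y ∉ S) {n : ℕ} (hn : y ^ q ^ n ∈ S) : ∃ z ∉ S, z ^ q ∈ S := by
  induction n generalizing y with
  | zero => exact absurd (by simpa using hn) hy
  | succ n ih =>
    by_cases hyq : y ^ q ∈ S
    · exact ⟨y, hy, hyq⟩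
    · exact ih hyq (by rwa [← pow_mul, ← pow_succ'])

theorem IsPurelyInseparable.exists_notMem_range_and_pow_mem_range (K E : Type*) [Field K]
    [Field E] [Algebra K E] (q : ℕ) [ExpChar K q] [IsPurelyInseparable K E]
    (h : ¬ Function.Surjective (algebraMap K E)) :
    ∃ y ∉ (algebraMap K E).range, y ^ q ∈ (algebraMap K E).range := by
  obtain ⟨y, hy⟩ := not_forall.mp h
  obtain ⟨n, hn⟩ := IsPurelyInseparable.pow_mem K q y
  exact exists_notMem_and_pow_mem_of_pow_pow_mem (S := ((algebraMap K E).range : Set E)) hy hn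

theorem Subfield.eq_or_eq_top_of_le_of_finrank_prime {K : Type*} [Field K] {F E : Subfield K}
    (hle : F ≤ E) (hp : (finrank F K).Prime) : E = F ∨ E = ⊤ := by
  have := IntermediateField.isSimpleOrder_of_finrank_prime F K hp
  rcases eq_bot_or_eq_top (E.toIntermediateField (K := F) fun x ↦ hle x.2) with hbot | htop
  · left
    have := congrArg IntermediateField.toSubfield hbot
    rw [Subfield.toIntermediateField_toSubfield, IntermediateField.bot_toSubfield] at this
    exact this.trans F.fieldRange_subtype
  · right
    have := congrArg IntermediateField.toSubfield htop
    rwa [Subfield.toIntermediateField_toSubfield, IntermediateField.top_toSubfield] at this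

theorem RingHom.mem_range_of_pow_mem_range_comp_frobenius {K L : Type*} [Field K] [CommRing L]
    [IsReduced L] (p : ℕ) [ExpChar K p] [ExpChar L p] (f : K →+* L) {x : L}
    (hx : x ^ p ∈ (f.comp (frobenius K p)).range) : x ∈ f.range := by
  obtain ⟨c, hc⟩ := hx
  refine ⟨c, frobenius_inj L p ?_⟩
  simpa [frobenius_def] using hc

theorem RingHom.frobenius_fieldRange_le_comap {K L : Type*} [Field K] [Field L] (p : ℕ)
    [ExpChar K p] [ExpChar L p] (f : K →+* L) :
    (frobenius K p).fieldRange ≤ ((frobenius L p).fieldRange).comap f := by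
  rintro _ ⟨c, rfl⟩
  exact ⟨f c, by simp [frobenius_def]⟩

/-- Let `L₀` be a field of characteristic `p > 0` with `[L₀ : L₀ᵖ] = p`, and let `L`
be a purely inseparable field extension of `L₀` with `L ≠ L₀`.  Then every element of
an algebraic closure of `L` whose `p`-th power lies in `L₀` already lies in `L`
(i.e. `L ⊇ L₀^{1/p}`). -/
theorem pth_root_mem_of_purelyInseparable (p : ℕ) [Fact p.Prime]
    {L₀ L : Type*} [Field L₀] [Field L] [Algebra L₀ L] [CharP L₀ p] [CharP L p]
    (hdeg : Module.finrank ↥((frobenius L₀ p).fieldRange) L₀ = p)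
    [IsPurelyInseparable L₀ L]
    (hne : ¬ Function.Surjective (algebraMap L₀ L))
    (x : AlgebraicClosure L)
    (hx : x ^ p ∈ Set.range (⇑(algebraMap L (AlgebraicClosure L)) ∘ ⇑(algebraMap L₀ L))) :
    x ∈ Set.range (algebraMap L (AlgebraicClosure L)) := by
  set f := algebraMap L₀ L
  obtain ⟨y, hy, a, ha⟩ := IsPurelyInseparable.exists_notMem_range_and_pow_mem_range L₀ L p hne
  set S := ((frobenius L p).fieldRange).comap f
  have haS : a ∈ S := ⟨y, ha.symm⟩
  have haF : a ∉ (frobenius L₀ p).fieldRange := by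
    rintro ⟨c, rfl⟩
    exact hy (f.mem_range_of_pow_mem_range_comp_frobenius p ⟨c, ha⟩)
  have hS : S = ⊤ :=
    (Subfield.eq_or_eq_top_of_le_of_finrank_prime (f.frobenius_fieldRange_le_comap p)
      (hdeg.symm ▸ Fact.out)).resolve_left fun h ↦ haF (h ▸ haS)
  obtain ⟨b, hb⟩ := hx
  obtain ⟨w, hw⟩ : b ∈ S := hS ▸ Subfield.mem_top b
  exact (algebraMap L _).mem_range_of_pow_mem_range_comp_frobenius p ⟨w, by simpa [hw] using hb⟩
end
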